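/- arXiv:1605.02352 — 4 statements merged into one kernel-verified Lean document; each statement's English description precedes it below -/
import Mathlib

section
/- The functions m_0,…,m_{b−1} : Σ^∞ → ℝ defined by m_r(v) = Σ_{k≥0} π_r(v^{(k)}) (where π_r is the fundamental probability with initial distribution given by row r of the transition matrix, and v^{(k)} is the length-k prefix of v) form the unique family of bounded functions on Σ^∞ satisfying the system m_r(v) = 1 + p_{r v_1} m_{v_1}(v̄) for all r ∈ Σ and v ∈ Σ^∞, where v̄ = v_2 v_3 … denotes the shift of v. -/
/-!
Since every transition probability is at most some `q < 1`, the prefix probabilities decay like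
`q ^ k`, so the series defining `m` converges to a bounded function, and peeling off its first
term gives the recurrence. The difference `g` of two bounded solutions satisfies
`|g r v| ≤ q * |g (v 0) v̄|`; iterating this along the shift gives `|g| ≤ q ^ n * C` for all
`n`, hence `g = 0`.
-/

/-- `prefProb p r v k` is the probability `π_r(v^{(k)})` that a Markov chain with
transition matrix `p` started from the row `r` produces the prefix `v_1 … v_k`. -/
def prefProb {b : ℕ} (p : Fin b → Fin b → ℝ) : Fin b → (ℕ → Fin b) → ℕ → ℝ
  | _, _, 0 => 1
  | r, v, (k + 1) => p r (v 0) * prefProb p (v 0) (fun i => v (i + 1)) k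

open Filter Topology

theorem eq_zero_of_abs_le_mul_abs_comp {X : Type*} {g : X → ℝ} (T : X → X) {q C : ℝ}
    (hq0 : 0 ≤ q) (hq1 : q < 1) (hC : ∀ x, |g x| ≤ C) (hg : ∀ x, |g x| ≤ q * |g (T x)|) :
    g = 0 := by
  have hpow : ∀ n x, |g x| ≤ q ^ n * C := by
    intro n
    induction n with
    | zero => simpa using hC
    | succ n ih =>
      intro x
      calc |g x| ≤ q * |g (T x)| := hg x
        _ ≤ q * (q ^ n * C) := mul_le_mul_of_nonneg_left (ih _) hq0
        _ = q ^ (n + 1) * C := by ring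
  have hlim : Tendsto (fun n : ℕ => q ^ n * C) atTop (𝓝 0) := by
    simpa using (tendsto_pow_atTop_nhds_zero_of_lt_one hq0 hq1).mul_const C
  funext x
  exact abs_nonpos_iff.mp (ge_of_tendsto' hlim fun n => hpow n x)

theorem Finite.exists_lt_one_forall_le {ι : Type*} [Finite ι] {f : ι → ℝ}
    (hf : ∀ i, f i < 1) :
    ∃ q, 0 ≤ q ∧ q < 1 ∧ ∀ i, f i ≤ q := by
  have hfq : ∀ᶠ q in 𝓝[<] (1 : ℝ), ∀ i, f i ≤ q :=
    eventually_all.2 fun i => ((eventually_gt_nhds (hf i)).filter_mono nhdsWithin_le_nhds).mono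
      fun _ => le_of_lt
  have hq0 : ∀ᶠ q in 𝓝[<] (1 : ℝ), 0 ≤ q :=
    (eventually_gt_nhds one_pos).filter_mono nhdsWithin_le_nhds |>.mono fun _ => le_of_lt
  obtain ⟨q, ⟨hq0, hfq⟩, hq1⟩ := (hq0.and hfq).and self_mem_nhdsWithin |>.exists
  exact ⟨q, hq0, hq1, hfq⟩

section prefProb

variable {b : ℕ} {p : Fin b → Fin b → ℝ}

theorem prefProb_nonneg (hp0 : ∀ i j, 0 ≤ p i j) (k : ℕ) (r : Fin b) (v : ℕ → Fin b) :
    0 ≤ prefProb p r v k := by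
  induction k generalizing r v with
  | zero => exact zero_le_one
  | succ k ih => exact mul_nonneg (hp0 _ _) (ih _ _)

theorem prefProb_le_pow {q : ℝ} (hp0 : ∀ i j, 0 ≤ p i j) (hpq : ∀ i j, p i j ≤ q)
    (k : ℕ) (r : Fin b) (v : ℕ → Fin b) : prefProb p r v k ≤ q ^ k := by
  induction k generalizing r v with
  | zero => exact le_rfl
  | succ k ih =>
    rw [pow_succ']
    exact mul_le_mul (hpq _ _) (ih _ _) (prefProb_nonneg hp0 _ _ _)
      ((hp0 r (v 0)).trans (hpq _ _))

theorem summable_prefProb {q : ℝ} (hp0 : ∀ i j, 0 ≤ p i j) (hpq : ∀ i j, p i j ≤ q)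
    (hq0 : 0 ≤ q) (hq1 : q < 1) (r : Fin b) (v : ℕ → Fin b) :
    Summable (prefProb p r v) :=
  (summable_geometric_of_lt_one hq0 hq1).of_nonneg_of_le (prefProb_nonneg hp0 · r v)
    (prefProb_le_pow hp0 hpq · r v)

theorem tsum_prefProb_le {q : ℝ} (hp0 : ∀ i j, 0 ≤ p i j) (hpq : ∀ i j, p i j ≤ q)
    (hq0 : 0 ≤ q) (hq1 : q < 1) (r : Fin b) (v : ℕ → Fin b) :
    ∑' k, prefProb p r v k ≤ (1 - q)⁻¹ := by
  rw [← tsum_geometric_of_lt_one hq0 hq1]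
  exact (summable_prefProb hp0 hpq hq0 hq1 r v).tsum_le_tsum (prefProb_le_pow hp0 hpq · r v)
    (summable_geometric_of_lt_one hq0 hq1)

theorem tsum_prefProb_eq_one_add {r : Fin b} {v : ℕ → Fin b}
    (hs : Summable (prefProb p r v)) :
    ∑' k, prefProb p r v k =
      1 + p r (v 0) * ∑' k, prefProb p (v 0) (fun i => v (i + 1)) k := by
  rw [hs.tsum_eq_zero_add, ← tsum_mul_left]
  rfl

end prefProb

theorem m_unique_bounded_solution_general (b : ℕ)
    (p : Fin b → Fin b → ℝ)
    (hp : ∀ i j, 0 < p i j ∧ p i j < 1)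
    (m : Fin b → (ℕ → Fin b) → ℝ)
    (hm : ∀ r v, m r v = ∑' k : ℕ, prefProb p r v k) :
    ((∀ r, ∃ C : ℝ, ∀ v, |m r v| ≤ C) ∧
      (∀ r (v : ℕ → Fin b), m r v = 1 + p r (v 0) * m (v 0) (fun i => v (i + 1)))) ∧
    (∀ f : Fin b → (ℕ → Fin b) → ℝ,
      (∀ r, ∃ C : ℝ, ∀ v, |f r v| ≤ C) →
      (∀ r (v : ℕ → Fin b), f r v = 1 + p r (v 0) * f (v 0) (fun i => v (i + 1))) →
      f = m) := by
  have hp0 : ∀ i j, 0 ≤ p i j := fun i j => (hp i j).1.le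
  obtain ⟨q, hq0, hq1, hpq⟩ :=
    Finite.exists_lt_one_forall_le (f := fun ij : Fin b × Fin b => p ij.1 ij.2) fun _ => (hp _ _).2
  replace hpq : ∀ i j, p i j ≤ q := fun i j => hpq (i, j)
  have hm_bound (r v) : |m r v| ≤ (1 - q)⁻¹ := by
    rw [hm, abs_of_nonneg (tsum_nonneg (prefProb_nonneg hp0 · r v))]
    exact tsum_prefProb_le hp0 hpq hq0 hq1 r v
  have hm_rec (r v) : m r v = 1 + p r (v 0) * m (v 0) (fun i => v (i + 1)) := by
    rw [hm, hm, tsum_prefProb_eq_one_add (summable_prefProb hp0 hpq hq0 hq1 r v)]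
  refine ⟨⟨fun r => ⟨_, hm_bound r⟩, hm_rec⟩, fun f hf_bdd hf_rec => ?_⟩
  obtain ⟨C, hC⟩ : ∃ C, ∀ r v, |f r v| ≤ C := by
    choose C hC using hf_bdd
    obtain ⟨M, hM⟩ := Finite.exists_le C
    exact ⟨M, fun r v => (hC r v).trans (hM r)⟩
  have hdiff_contract (r v) : |f r v - m r v| ≤
      q * |f (v 0) (fun i => v (i + 1)) - m (v 0) (fun i => v (i + 1))| := by
    rw [hf_rec r v, hm_rec r v, add_sub_add_left_eq_sub, ← mul_sub, abs_mul,
      abs_of_nonneg (hp0 _ _)]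
    exact mul_le_mul_of_nonneg_right (hpq _ _) (abs_nonneg _)
  have hdiff_zero := eq_zero_of_abs_le_mul_abs_comp
    (g := fun x : Fin b × (ℕ → Fin b) => f x.1 x.2 - m x.1 x.2)
    (fun x => (x.2 0, fun i => x.2 (i + 1))) hq0 hq1
    (fun x => (abs_sub _ _).trans (add_le_add (hC _ _) (hm_bound _ _)))
    (fun x => hdiff_contract x.1 x.2)
  funext r v
  exact sub_eq_zero.mp (congrFun hdiff_zero (r, v))

/-- The functions `m_r(v) = Σ_{k ≥ 0} π_r(v^{(k)})` form the unique family of bounded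
functions on `Σ^∞` satisfying `m_r(v) = 1 + p_{r v₁} m_{v₁}(v̄)`. -/
theorem m_unique_bounded_solution (b : ℕ) (hb : 2 ≤ b)
    (p : Fin b → Fin b → ℝ)
    (hp : ∀ i j, 0 < p i j ∧ p i j < 1)
    (hstoch : ∀ i, ∑ j, p i j = 1)
    (m : Fin b → (ℕ → Fin b) → ℝ)
    (hm : ∀ r v, m r v = ∑' k : ℕ, prefProb p r v k) :
    ((∀ r, ∃ C : ℝ, ∀ v, |m r v| ≤ C) ∧
      (∀ r (v : ℕ → Fin b), m r v = 1 + p r (v 0) * m (v 0) (fun i => v (i + 1)))) ∧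
    (∀ f : Fin b → (ℕ → Fin b) → ℝ,
      (∀ r, ∃ C : ℝ, ∀ v, |f r v| ≤ C) →
      (∀ r (v : ℕ → Fin b), f r v = 1 + p r (v 0) * f (v 0) (fun i => v (i + 1))) →
      f = m) :=
  m_unique_bounded_solution_general b p hp m hm
end

section
/- For the memoryless source with p_r = (1−β)/(1−β^b)·β^r (r ∈ Σ, β > 0; p_r = 1/b if β = 1), the function m(v) = Σ_{k≥0} π(v^{(k)}) satisfies m(v) = α F(v) + γ for all v ∈ Σ^∞, where γ = (1−β^b)/(β−β^b), α = (β−1)γ (with γ = b/(b−1) and α = 0 when β = 1), and F(v) = P(S ≤ v) is the distribution function of the source. -/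
/-!
With `S = ∑_{j<b} β^j` the weights are `p_r = β^r / S` (also for `β = 1`) and `γ = S/(S - 1)`.
Both sides solve the affine recursion `f(v) = 1 + p_{v₁} f(v̄)`: for `m` this is the shift of
the series, for `αF + γ` it follows from the recursion of `F` and the identity
`α ∑_{j<r} p_j + γ = 1 + p_r γ`, a rearrangement of `(β - 1) ∑_{j<r} β^j = β^r - 1`.
As every `p_r ≤ q < 1`, the difference of two bounded solutions is bounded by `q^n C`
for all `n`, hence vanishes.
-/

open Finset Filter Topology

section TailRecursion

variable {α : Type*}

theorem eq_zero_of_bounded_of_eq_mul_tail {c : α → ℝ} {q : ℝ} (hq : q < 1)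
    (hc : ∀ a, |c a| ≤ q) {D : (ℕ → α) → ℝ} {C : ℝ} (hD : ∀ v, |D v| ≤ C)
    (hrec : ∀ v, D v = c (v 0) * D (fun i => v (i + 1))) (v : ℕ → α) : D v = 0 := by
  have hq0 : 0 ≤ q := (abs_nonneg _).trans (hc (v 0))
  have hpow : ∀ (n : ℕ) (w : ℕ → α), |D w| ≤ q ^ n * C := by
    intro n
    induction n with
    | zero => simpa using hD
    | succ n ih =>
      intro w
      rw [hrec w, abs_mul, pow_succ', mul_assoc]
      exact mul_le_mul (hc _) (ih _) (abs_nonneg _) hq0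
  have hlim : Tendsto (fun n : ℕ => q ^ n * C) atTop (𝓝 0) := by
    simpa using (tendsto_pow_atTop_nhds_zero_of_lt_one hq0 hq).mul_const C
  exact abs_nonpos_iff.mp (ge_of_tendsto' hlim fun n => hpow n v)

theorem eq_of_bounded_of_tail_rec {a c : α → ℝ} {q : ℝ} (hq : q < 1) (hc : ∀ x, |c x| ≤ q)
    {f g : (ℕ → α) → ℝ} (hf : ∃ C, ∀ v, |f v| ≤ C) (hg : ∃ C, ∀ v, |g v| ≤ C)
    (hfrec : ∀ v, f v = a (v 0) + c (v 0) * f (fun i => v (i + 1)))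
    (hgrec : ∀ v, g v = a (v 0) + c (v 0) * g (fun i => v (i + 1))) (v : ℕ → α) :
    f v = g v := by
  obtain ⟨Cf, hCf⟩ := hf
  obtain ⟨Cg, hCg⟩ := hg
  refine sub_eq_zero.mp (eq_zero_of_bounded_of_eq_mul_tail hq hc (D := fun w => f w - g w)
    (fun w => (abs_sub _ _).trans (add_le_add (hCf w) (hCg w))) (fun w => ?_) v)
  rw [hfrec w, hgrec w]
  ring

end TailRecursion

section PrefixProducts

variable {α : Type*} {p : α → ℝ} {q : ℝ}

theorem prod_range_le_pow (h0 : ∀ a, 0 ≤ p a) (hq : ∀ a, p a ≤ q) (v : ℕ → α) (k : ℕ) :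
    ∏ i ∈ range k, p (v i) ≤ q ^ k := by
  simpa using prod_le_prod (s := range k) (fun i _ => h0 (v i)) (fun i _ => hq (v i))

theorem summable_prod_range (h0 : ∀ a, 0 ≤ p a) (hq : ∀ a, p a ≤ q) (hq1 : q < 1)
    (v : ℕ → α) : Summable fun k => ∏ i ∈ range k, p (v i) :=
  (summable_geometric_of_lt_one ((h0 (v 0)).trans (hq (v 0))) hq1).of_nonneg_of_le
    (fun _ => prod_nonneg fun i _ => h0 (v i)) (prod_range_le_pow h0 hq v)

theorem abs_tsum_prod_range_le (h0 : ∀ a, 0 ≤ p a) (hq : ∀ a, p a ≤ q) (hq1 : q < 1)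
    (v : ℕ → α) : |∑' k, ∏ i ∈ range k, p (v i)| ≤ (1 - q)⁻¹ := by
  have hq0 : 0 ≤ q := (h0 (v 0)).trans (hq (v 0))
  rw [abs_of_nonneg (tsum_nonneg fun _ => prod_nonneg fun i _ => h0 (v i)),
    ← tsum_geometric_of_lt_one hq0 hq1]
  exact Summable.tsum_le_tsum (prod_range_le_pow h0 hq v) (summable_prod_range h0 hq hq1 v)
    (summable_geometric_of_lt_one hq0 hq1)

theorem tsum_prod_range_eq_one_add {v : ℕ → α}
    (hv : Summable fun k => ∏ i ∈ range k, p (v i)) :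
    ∑' k, ∏ i ∈ range k, p (v i) = 1 + p (v 0) * ∑' k, ∏ i ∈ range k, p (v (i + 1)) := by
  rw [hv.tsum_eq_zero_add, prod_range_zero, ← tsum_mul_left]
  congr 1
  exact tsum_congr fun k => by rw [prod_range_succ', mul_comm]

end PrefixProducts

theorem exists_lt_one_forall_le_of_sum_eq_one {α : Type*} [Fintype α] [Nontrivial α]
    {p : α → ℝ} (hpos : ∀ a, 0 < p a) (hsum : ∑ a, p a = 1) : ∃ q < 1, ∀ a, p a ≤ q := by
  obtain ⟨a₀, ha₀⟩ := Finite.exists_max p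
  obtain ⟨a₁, ha₁⟩ := exists_ne a₀
  refine ⟨p a₀, ?_, ha₀⟩
  rw [← hsum]
  exact single_lt_sum ha₁ (mem_univ _) (mem_univ _) (hpos a₁) fun k _ _ => (hpos k).le

theorem Fin.sum_filter_lt_eq_sum_range {M : Type*} [AddCommMonoid M] {n : ℕ} (f : ℕ → M)
    (r : Fin n) : ∑ k ∈ univ.filter (fun k => k < r), f k = ∑ j ∈ range r, f j := by
  rw [filter_gt_eq_Iio, ← Nat.Iio_eq_range, ← Fin.map_valEmbedding_Iio, sum_map]
  rfl

section GeometricSource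

variable (b : ℕ) (β : ℝ)

theorem one_lt_geom_sum (hβ : 0 < β) (hb : 2 ≤ b) : 1 < ∑ j ∈ range b, β ^ j := by
  obtain ⟨n, rfl⟩ := Nat.exists_eq_add_of_le' hb
  rw [sum_range_succ', pow_zero, lt_add_iff_pos_left]
  exact sum_pos (fun i _ => pow_pos hβ _) ⟨0, mem_range.mpr n.succ_pos⟩

theorem pow_div_geom_sum_eq (r : ℕ) :
    β ^ r / ∑ j ∈ range b, β ^ j =
      if β = 1 then (1 : ℝ) / b else (1 - β) / (1 - β ^ b) * β ^ r := by
  split_ifs with h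
  · simp [h]
  · rw [geom_sum_eq h, div_div_eq_mul_div, ← neg_div_neg_eq (1 - β), neg_sub, neg_sub]
    ring

theorem geom_sum_div_geom_sum_sub_one_eq :
    (∑ j ∈ range b, β ^ j) / (∑ j ∈ range b, β ^ j - 1) =
      if β = 1 then (b : ℝ) / (b - 1) else (1 - β ^ b) / (β - β ^ b) := by
  split_ifs with h
  · simp [h]
  · have h1 : β - 1 ≠ 0 := sub_ne_zero.mpr h
    rw [geom_sum_eq h, div_sub_one h1, div_div_div_cancel_right₀ h1, ← neg_div_neg_eq]
    ring_nf

theorem geom_sum_affine_step {γ : ℝ} (S : ℝ) (hS : S ≠ 0) (hγ : γ * (S - 1) = S) (r : ℕ) :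
    (β - 1) * γ * ((∑ j ∈ range r, β ^ j) / S) + γ = 1 + β ^ r / S * γ := by
  have := geom_sum_mul β r
  field_simp
  linear_combination γ * this + hγ

end GeometricSource

/-- For a memoryless source with `p_r = (1−β)/(1−β^b) β^r`, the function
`m(v) = Σ_{k≥0} π(v^{(k)})` satisfies `m = α F + γ`, where `F` is the (unique bounded)
distribution function of the source, `γ = (1−β^b)/(β−β^b)` and `α = (β−1)γ`
(with `γ = b/(b−1)`, `α = 0` when `β = 1`). -/
theorem m_eq_alpha_F_add_gamma (b : ℕ) (hb : 2 ≤ b) (β : ℝ) (hβ : 0 < β)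
    (p : Fin b → ℝ)
    (hp : ∀ r : Fin b, p r = if β = 1 then (1 : ℝ) / b else (1 - β) / (1 - β ^ b) * β ^ (r : ℕ))
    (F : (ℕ → Fin b) → ℝ)
    (hFbdd : ∃ C : ℝ, ∀ v, |F v| ≤ C)
    (hF : ∀ v : ℕ → Fin b,
      F v = (∑ k ∈ Finset.univ.filter (fun k => k < v 0), p k) +
        p (v 0) * F (fun i => v (i + 1)))
    (γ α : ℝ)
    (hγ : γ = if β = 1 then (b : ℝ) / (b - 1) else (1 - β ^ b) / (β - β ^ b))
    (hα : α = (β - 1) * γ) :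
    ∀ v : ℕ → Fin b,
      (∑' k : ℕ, ∏ i ∈ Finset.range k, p (v i)) = α * F v + γ := by
  have : Nontrivial (Fin b) := Fin.nontrivial_iff_two_le.mpr hb
  set S := ∑ j ∈ range b, β ^ j
  have hS : 1 < S := one_lt_geom_sum b β hβ hb
  have hpS (r : Fin b) : p r = β ^ (r : ℕ) / S := (hp r).trans (pow_div_geom_sum_eq ..).symm
  have hγS : γ * (S - 1) = S := by
    rw [hγ, ← geom_sum_div_geom_sum_sub_one_eq, div_mul_cancel₀ _ (by linarith)]
  have hpos (r : Fin b) : 0 < p r := hpS r ▸ div_pos (pow_pos hβ _) (by linarith)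
  have hsum : ∑ r, p r = 1 := by
    simp_rw [hpS, ← sum_div, Fin.sum_univ_eq_sum_range (fun j => β ^ j)]
    exact div_self (by linarith)
  obtain ⟨q, hq1, hpq⟩ := exists_lt_one_forall_le_of_sum_eq_one hpos hsum
  have h0 (r : Fin b) : 0 ≤ p r := (hpos r).le
  have hαFγ_bdd : ∃ C, ∀ v, |α * F v + γ| ≤ C := by
    obtain ⟨C, hC⟩ := hFbdd
    exact ⟨|α| * C + |γ|, fun v => (abs_add_le _ _).trans (by rw [abs_mul]; gcongr; exact hC v)⟩
  have hαFγ_rec (v : ℕ → Fin b) :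
      α * F v + γ = 1 + p (v 0) * (α * F (fun i => v (i + 1)) + γ) := by
    have hprefix : ∑ k ∈ univ.filter (fun k => k < v 0), p k =
        (∑ j ∈ range (v 0), β ^ j) / S := by
      simp_rw [hpS]
      rw [Fin.sum_filter_lt_eq_sum_range (fun j => β ^ j / S), sum_div]
    have hstep := geom_sum_affine_step β S (by linarith) hγS (v 0)
    rw [← hpS] at hstep
    rw [hF v, hprefix, hα]
    linear_combination hstep
  exact eq_of_bounded_of_tail_rec (a := fun _ => 1) hq1
    (fun r => (abs_of_pos (hpos r)).trans_le (hpq r)) ⟨_, abs_tsum_prod_range_le h0 hpq hq1⟩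
    hαFγ_bdd (fun v => tsum_prod_range_eq_one_add (summable_prod_range h0 hpq hq1 v)) hαFγ_rec
end

section
/- In the uniform model (π(v^{(k)}) = b^{−k}), for v, w ∈ Σ^∞ with v ≠ w, Cov(j(v,S), j(w,S)) = b/(b−1)² − (b+1)/(b−1)² · b^{−j(v,w)}, where j(v,w) is the common prefix length of v and w. -/
open MeasureTheory Set

/-- Length of the longest common prefix of two (distinct) infinite strings. -/
noncomputable def cpl {b : ℕ} (v w : ℕ → Fin b) : ℕ := sInf {i | v i ≠ w i}

open scoped ENNReal

namespace CovUnifAux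

variable {b : ℕ}

def Acyl (u : ℕ → Fin b) (k : ℕ) : Set (ℕ → Fin b) := {S | ∀ i < k, S i = u i}
def Ncyl (u : ℕ → Fin b) : Set (ℕ → Fin b) := {S | ∀ i, S i = u i}

lemma measurableSet_Acyl (u : ℕ → Fin b) (k : ℕ) : MeasurableSet (Acyl u k) := by
  have h : Acyl u k = ⋂ i ∈ Finset.range k, (fun S : ℕ → Fin b => S i) ⁻¹' {u i} := by
    ext S; simp [Acyl]
  rw [h]
  exact MeasurableSet.biInter (Finset.range k).countable_toSet
    fun i _ => (measurable_pi_apply i) (measurableSet_singleton (u i))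

lemma measurableSet_Ncyl (u : ℕ → Fin b) : MeasurableSet (Ncyl u) := by
  have h : Ncyl u = ⋂ i, (fun S : ℕ → Fin b => S i) ⁻¹' {u i} := by
    ext S; simp [Ncyl]
  rw [h]
  exact MeasurableSet.iInter fun i => (measurable_pi_apply i) (measurableSet_singleton (u i))

lemma cpl_ge_iff {v S : ℕ → Fin b} (h : ∃ i, v i ≠ S i) {k : ℕ} :
    k ≤ cpl v S ↔ ∀ i < k, S i = v i := by
  have hne : {i | v i ≠ S i}.Nonempty := h
  constructor
  · intro hk i hik
    by_contra hne2
    have hmem : i ∈ {i | v i ≠ S i} := fun hh => hne2 hh.symm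
    have := Nat.sInf_le hmem
    simp only [cpl] at hk
    omega
  · intro hall
    by_contra hlt
    push_neg at hlt
    exact (Nat.sInf_mem hne) (hall _ hlt).symm

lemma event_eq (v : ℕ → Fin b) (k : ℕ) :
    {S | k + 1 ≤ cpl v S} = Acyl v (k + 1) \ Ncyl v := by
  ext S
  by_cases h : S ∈ Ncyl v
  · have hSv : S = v := funext h
    subst hSv
    simp only [mem_setOf_eq, mem_diff, h, and_false, iff_false, not_le, cpl]
    have : {i | S i ≠ S i} = (∅ : Set ℕ) := by ext i; simp
    rw [this, Nat.sInf_empty]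
    simp [Acyl]
  · have hex : ∃ i, v i ≠ S i := by
      by_contra hc; push_neg at hc
      exact h fun i => (hc i).symm
    simp only [mem_setOf_eq, mem_diff, h, not_false_iff, and_true]
    rw [cpl_ge_iff hex]
    rfl

lemma measurable_cpl (v : ℕ → Fin b) : Measurable (fun S : ℕ → Fin b => cpl v S) := by
  apply measurable_to_countable'
  intro n
  have hs : ∀ m : ℕ, MeasurableSet {S : ℕ → Fin b | m + 1 ≤ cpl v S} := fun m => by
    rw [event_eq]; exact (measurableSet_Acyl _ _).diff (measurableSet_Ncyl _)
  have h : (fun S : ℕ → Fin b => cpl v S) ⁻¹' {n} =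
      {S : ℕ → Fin b | n ≤ cpl v S} \ {S : ℕ → Fin b | n + 1 ≤ cpl v S} := by
    ext S; simp only [mem_preimage, mem_singleton_iff, mem_diff, mem_setOf_eq]; omega
  rw [h]
  cases n with
  | zero =>
    have : {S : ℕ → Fin b | 0 ≤ cpl v S} = univ := by ext S; simp
    rw [this]; exact MeasurableSet.univ.diff (hs 0)
  | succ m => exact (hs m).diff (hs (m + 1))


lemma nat_cast_tsum (n : ℕ) :
    (n : ℝ≥0∞) = ∑' k : ℕ, if k + 1 ≤ n then 1 else 0 := by
  have h1 : ∀ k ∉ Finset.range n, (if k + 1 ≤ n then (1 : ℝ≥0∞) else 0) = 0 := by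
    intro k hk; rw [if_neg]; simp only [Finset.mem_range] at hk; omega
  rw [tsum_eq_sum h1]
  have h2 : ∀ k ∈ Finset.range n, (if k + 1 ≤ n then (1 : ℝ≥0∞) else 0) = 1 := by
    intro k hk; rw [if_pos]; simp only [Finset.mem_range] at hk; omega
  rw [Finset.sum_congr rfl h2, Finset.sum_const, Finset.card_range, nsmul_eq_mul, mul_one]

lemma nat_cast_mul_tsum (n m : ℕ) :
    (n : ℝ≥0∞) * (m : ℝ≥0∞) =
      ∑' k : ℕ, ∑' l : ℕ, (if k + 1 ≤ n ∧ l + 1 ≤ m then (1 : ℝ≥0∞) else 0) := by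
  rw [nat_cast_tsum n, nat_cast_tsum m, ← ENNReal.tsum_mul_right]
  refine tsum_congr fun k => ?_
  rw [← ENNReal.tsum_mul_left]
  refine tsum_congr fun l => ?_
  by_cases h1 : k + 1 ≤ n <;> by_cases h2 : l + 1 ≤ m <;> simp [h1, h2]

lemma measurableSet_event (u : ℕ → Fin b) (k : ℕ) :
    MeasurableSet {S : ℕ → Fin b | k + 1 ≤ cpl u S} :=
  (event_eq u k) ▸ ((measurableSet_Acyl _ _).diff (measurableSet_Ncyl _))


section RealSums

variable {p : ℝ}

lemma summable_pow_succ (hp0 : 0 ≤ p) (hp1 : p < 1) : Summable fun l : ℕ => p ^ (l + 1) :=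
  ((summable_geometric_of_lt_one hp0 hp1).mul_right p).congr fun l => (pow_succ p l).symm

lemma tsum_pow_succ (hp0 : 0 ≤ p) (hp1 : p < 1) :
    ∑' l : ℕ, p ^ (l + 1) = p * (1 - p)⁻¹ := by
  calc ∑' l : ℕ, p ^ (l + 1) = ∑' l : ℕ, p ^ l * p := tsum_congr fun l => pow_succ p l
    _ = (∑' l : ℕ, p ^ l) * p := tsum_mul_right
    _ = (1 - p)⁻¹ * p := by rw [tsum_geometric_of_lt_one hp0 hp1]
    _ = p * (1 - p)⁻¹ := mul_comm _ _

lemma innerA (hp0 : 0 ≤ p) (hp1 : p < 1) (k j : ℕ) (hk : k + 1 ≤ j) :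
    (∑' l : ℕ, if min (k + 1) (l + 1) ≤ j then p ^ max (k + 1) (l + 1) else 0)
      = p * (1 - p)⁻¹ +
        ((k + 1) * p ^ (k + 1) - ∑ l ∈ Finset.range (k + 1), p ^ (l + 1)) := by
  have hd : Summable fun l : ℕ => if l + 1 ≤ k + 1 then p ^ (k + 1) - p ^ (l + 1) else 0 :=
    summable_of_ne_finset_zero (s := Finset.range (k + 1)) fun l hl => by
      rw [if_neg]; simp only [Finset.mem_range] at hl; omega
  have hpt : ∀ l : ℕ, (if min (k + 1) (l + 1) ≤ j then p ^ max (k + 1) (l + 1) else 0)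
      = p ^ (l + 1) + (if l + 1 ≤ k + 1 then p ^ (k + 1) - p ^ (l + 1) else 0) := by
    intro l
    rw [if_pos (le_trans (min_le_left _ _) hk)]
    by_cases h : l + 1 ≤ k + 1
    · rw [if_pos h, max_eq_left h]; ring
    · rw [if_neg h, max_eq_right (by omega), add_zero]
  rw [tsum_congr hpt, Summable.tsum_add (summable_pow_succ hp0 hp1) hd, tsum_pow_succ hp0 hp1]
  congr 1
  rw [tsum_eq_sum (s := Finset.range (k + 1)) (fun l hl => by
    rw [if_neg]; simp only [Finset.mem_range] at hl; omega)]
  rw [Finset.sum_congr rfl (fun l hl => if_pos (by simp only [Finset.mem_range] at hl; omega)),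
    Finset.sum_sub_distrib, Finset.sum_const, Finset.card_range, nsmul_eq_mul]
  push_cast
  ring

lemma innerB (k j : ℕ) (hk : ¬ (k + 1 ≤ j)) :
    (∑' l : ℕ, if min (k + 1) (l + 1) ≤ j then p ^ max (k + 1) (l + 1) else 0)
      = j * p ^ (k + 1) := by
  have hpt : ∀ l : ℕ, (if min (k + 1) (l + 1) ≤ j then p ^ max (k + 1) (l + 1) else 0)
      = if l + 1 ≤ j then p ^ (k + 1) else 0 := by
    intro l
    by_cases h : l + 1 ≤ j
    · rw [if_pos (by omega), if_pos h, max_eq_left (by omega)]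
    · rw [if_neg (by omega), if_neg h]
  rw [tsum_congr hpt, tsum_eq_sum (s := Finset.range j) (fun l hl => by
      rw [if_neg]; simp only [Finset.mem_range] at hl; omega),
    Finset.sum_congr rfl (fun l hl => if_pos (by simp only [Finset.mem_range] at hl; omega)),
    Finset.sum_const, Finset.card_range, nsmul_eq_mul]

lemma summable_inner (hp0 : 0 ≤ p) (hp1 : p < 1) (j : ℕ) :
    Summable fun k : ℕ => (if k + 1 ≤ j
      then p * (1 - p)⁻¹ +
        ((k + 1) * p ^ (k + 1) - ∑ l ∈ Finset.range (k + 1), p ^ (l + 1))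
      else (j : ℝ) * p ^ (k + 1)) := by
  have he : Summable fun k : ℕ => (if k + 1 ≤ j
      then p * (1 - p)⁻¹ +
        ((k + 1) * p ^ (k + 1) - ∑ l ∈ Finset.range (k + 1), p ^ (l + 1))
        - (j : ℝ) * p ^ (k + 1)
      else 0) :=
    summable_of_ne_finset_zero (s := Finset.range j) fun k hk => by
      rw [if_neg]; simp only [Finset.mem_range] at hk; omega
  refine (((summable_pow_succ hp0 hp1).mul_left (j : ℝ)).add he).congr fun k => ?_
  by_cases h : k + 1 ≤ j
  · rw [if_pos h, if_pos h]; ring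
  · rw [if_neg h, if_neg h, add_zero]

lemma outerSum (hp0 : 0 ≤ p) (hp1 : p < 1) (j : ℕ) :
    (∑' k : ℕ, if k + 1 ≤ j
        then p * (1 - p)⁻¹ +
          ((k + 1) * p ^ (k + 1) - ∑ l ∈ Finset.range (k + 1), p ^ (l + 1))
        else (j : ℝ) * p ^ (k + 1))
      = j * (p * (1 - p)⁻¹) + ∑ k ∈ Finset.range j,
          (p * (1 - p)⁻¹ +
            ((k + 1) * p ^ (k + 1) - ∑ l ∈ Finset.range (k + 1), p ^ (l + 1))
            - j * p ^ (k + 1)) := by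
  have he : Summable fun k : ℕ => (if k + 1 ≤ j
      then p * (1 - p)⁻¹ +
        ((k + 1) * p ^ (k + 1) - ∑ l ∈ Finset.range (k + 1), p ^ (l + 1))
        - (j : ℝ) * p ^ (k + 1)
      else 0) :=
    summable_of_ne_finset_zero (s := Finset.range j) fun k hk => by
      rw [if_neg]; simp only [Finset.mem_range] at hk; omega
  have hpt : ∀ k : ℕ, (if k + 1 ≤ j
      then p * (1 - p)⁻¹ +
        ((k + 1) * p ^ (k + 1) - ∑ l ∈ Finset.range (k + 1), p ^ (l + 1))
      else (j : ℝ) * p ^ (k + 1))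
      = (j : ℝ) * p ^ (k + 1) + (if k + 1 ≤ j
      then p * (1 - p)⁻¹ +
        ((k + 1) * p ^ (k + 1) - ∑ l ∈ Finset.range (k + 1), p ^ (l + 1))
        - (j : ℝ) * p ^ (k + 1)
      else 0) := by
    intro k
    by_cases h : k + 1 ≤ j
    · rw [if_pos h, if_pos h]; ring
    · rw [if_neg h, if_neg h, add_zero]
  rw [tsum_congr hpt, Summable.tsum_add ((summable_pow_succ hp0 hp1).mul_left _) he,
    tsum_mul_left, tsum_pow_succ hp0 hp1]
  congr 1
  rw [tsum_eq_sum (s := Finset.range j) (fun k hk => by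
    rw [if_neg]; simp only [Finset.mem_range] at hk; omega)]
  exact Finset.sum_congr rfl fun k hk =>
    if_pos (by simp only [Finset.mem_range] at hk; omega)

end RealSums

section FinalAlgebra

lemma G_closed (b : ℝ) (hb : 2 ≤ b) (m : ℕ) :
    ∑ l ∈ Finset.range m, (1 / b) ^ (l + 1) = (1 - (1 / b) ^ m) * (1 / b) * (1 - 1 / b)⁻¹ := by
  have hb0 : b ≠ 0 := by intro h; rw [h] at hb; norm_num at hb
  have hb1 : b - 1 ≠ 0 := by intro h; linarith
  have h1 : (1 : ℝ) - 1 / b ≠ 0 := by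
    have h2 : 1 / b < 1 := by rw [div_lt_one (by linarith)]; linarith
    intro h; linarith
  induction m with
  | zero => simp
  | succ n ih =>
    rw [Finset.sum_range_succ, ih, pow_succ]
    field_simp
    ring

lemma final_algebra (b : ℝ) (hb : 2 ≤ b) (j : ℕ) :
    (j : ℝ) * ((1 / b) * (1 - 1 / b)⁻¹) + (∑ k ∈ Finset.range j,
        ((1 / b) * (1 - 1 / b)⁻¹ +
          ((k + 1) * (1 / b) ^ (k + 1) - ∑ l ∈ Finset.range (k + 1), (1 / b) ^ (l + 1))
          - j * (1 / b) ^ (k + 1)))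
      - ((1 / b) * (1 - 1 / b)⁻¹) * ((1 / b) * (1 - 1 / b)⁻¹)
    = b / (b - 1) ^ 2 - (b + 1) / (b - 1) ^ 2 * (1 / b) ^ j := by
  have hb0 : b ≠ 0 := by intro h; rw [h] at hb; norm_num at hb
  have hb1 : b - 1 ≠ 0 := by intro h; linarith
  have h1 : (1 : ℝ) - 1 / b ≠ 0 := by
    have h2 : 1 / b < 1 := by rw [div_lt_one (by linarith)]; linarith
    intro h; linarith
  have hsplit : ∑ k ∈ Finset.range j,
      ((1 / b) * (1 - 1 / b)⁻¹ +
        ((k + 1) * (1 / b) ^ (k + 1) - ∑ l ∈ Finset.range (k + 1), (1 / b) ^ (l + 1))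
        - (j : ℝ) * (1 / b) ^ (k + 1))
      = (∑ k ∈ Finset.range j,
          ((1 / b) * (1 - 1 / b)⁻¹ +
            ((k + 1) * (1 / b) ^ (k + 1) - ∑ l ∈ Finset.range (k + 1), (1 / b) ^ (l + 1))))
        - (j : ℝ) * ∑ k ∈ Finset.range j, (1 / b) ^ (k + 1) := by
    rw [Finset.sum_sub_distrib, Finset.mul_sum]
  rw [hsplit]
  clear hsplit
  induction j with
  | zero => simp; field_simp; ring
  | succ n ih =>
    rw [Finset.sum_range_succ, G_closed b hb (n + 1)]
    rw [G_closed b hb n] at ih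
    have hX : ∑ k ∈ Finset.range n, (1 / b * (1 - 1 / b)⁻¹ +
          ((↑k + 1) * (1 / b) ^ (k + 1) - ∑ l ∈ Finset.range (k + 1), (1 / b) ^ (l + 1)))
        = (b / (b - 1) ^ 2 - (b + 1) / (b - 1) ^ 2 * (1 / b) ^ n)
          + 1 / b * (1 - 1 / b)⁻¹ * (1 / b * (1 - 1 / b)⁻¹)
          - ↑n * (1 / b * (1 - 1 / b)⁻¹)
          + ↑n * ((1 - (1 / b) ^ n) * (1 / b) * (1 - 1 / b)⁻¹) := by linarith [ih]
    rw [hX, pow_succ]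
    push_cast
    simp only [one_div, inv_pow]
    field_simp
    ring
end FinalAlgebra

section Meas

variable (μS : Measure (ℕ → Fin b))
variable (hcyl : ∀ (u : ℕ → Fin b) (k : ℕ),
      μS {S | ∀ i < k, S i = u i} = ENNReal.ofReal (((1 : ℝ) / b) ^ k))

include hcyl

lemma meas_Acyl (u : ℕ → Fin b) (k : ℕ) :
    μS (Acyl u k) = ENNReal.ofReal (((1 : ℝ) / b) ^ k) := hcyl u k

lemma ncyl_null (hb : 2 ≤ b) (u : ℕ → Fin b) : μS (Ncyl u) = 0 := by
  have hb2 : (2 : ℝ) ≤ (b : ℝ) := by exact_mod_cast hb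
  have hbpos : (0 : ℝ) < b := by linarith
  have h0 : (0 : ℝ) ≤ 1 / b := by positivity
  have hb' : (1 : ℝ) / b < 1 := by rw [div_lt_one hbpos]; linarith
  have hmono : ∀ k, μS (Ncyl u) ≤ ENNReal.ofReal (((1 : ℝ) / b) ^ k) := fun k => by
    rw [← hcyl u k]; exact measure_mono fun S hS i _ => hS i
  have htend : Filter.Tendsto (fun k : ℕ => ENNReal.ofReal (((1 : ℝ) / b) ^ k))
      Filter.atTop (nhds 0) := by
    have h := tendsto_pow_atTop_nhds_zero_of_lt_one h0 hb'
    have h2 := (ENNReal.continuous_ofReal.tendsto 0).comp h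
    simpa [Function.comp_def] using h2
  exact le_antisymm (ge_of_tendsto' htend hmono) (zero_le)

lemma meas_event (hb : 2 ≤ b) (v : ℕ → Fin b) (k : ℕ) :
    μS {S | k + 1 ≤ cpl v S} = ENNReal.ofReal (((1 : ℝ) / b) ^ (k + 1)) := by
  rw [event_eq, measure_diff_null (ncyl_null μS hcyl hb v)]
  exact hcyl v (k + 1)

lemma meas_acyl_inter (v w : ℕ → Fin b) (hvw : v ≠ w) (k l : ℕ) :
    μS (Acyl v k ∩ Acyl w l) =
      if min k l ≤ cpl v w then ENNReal.ofReal (((1 : ℝ) / b) ^ max k l) else 0 := by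
  have hne : {i | v i ≠ w i}.Nonempty := Function.ne_iff.mp hvw
  have hjmem : v (cpl v w) ≠ w (cpl v w) := Nat.sInf_mem hne
  have hjlt : ∀ i < cpl v w, v i = w i := by
    intro i hi
    by_contra hc
    have hle : cpl v w ≤ i := Nat.sInf_le (show i ∈ {i | v i ≠ w i} from hc)
    omega
  rcases le_total k l with hkl | hlk
  · by_cases hmin : k ≤ cpl v w
    · have hset : Acyl v k ∩ Acyl w l = Acyl w l := by
        apply Set.inter_eq_self_of_subset_right
        intro S hS i hik
        have h1 : S i = w i := hS i (lt_of_lt_of_le hik hkl)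
        rw [h1, ← hjlt i (lt_of_lt_of_le hik hmin)]
      rw [hset, meas_Acyl μS hcyl, if_pos (by omega), max_eq_right hkl]
    · have hset : Acyl v k ∩ Acyl w l = ∅ := by
        ext S
        simp only [mem_inter_iff, mem_empty_iff_false, iff_false, not_and]
        intro h1 h2
        have e1 : S (cpl v w) = v (cpl v w) := h1 _ (by omega)
        have e2 : S (cpl v w) = w (cpl v w) := h2 _ (by omega)
        exact hjmem (e1.symm.trans e2)
      rw [hset, measure_empty, if_neg (by omega)]
  · by_cases hmin : l ≤ cpl v w
    · have hset : Acyl v k ∩ Acyl w l = Acyl v k := by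
        apply Set.inter_eq_self_of_subset_left
        intro S hS i hik
        have h1 : S i = v i := hS i (lt_of_lt_of_le hik hlk)
        rw [h1, hjlt i (lt_of_lt_of_le hik hmin)]
      rw [hset, meas_Acyl μS hcyl, if_pos (by omega), max_eq_left hlk]
    · have hset : Acyl v k ∩ Acyl w l = ∅ := by
        ext S
        simp only [mem_inter_iff, mem_empty_iff_false, iff_false, not_and]
        intro h1 h2
        have e1 : S (cpl v w) = v (cpl v w) := h1 _ (by omega)
        have e2 : S (cpl v w) = w (cpl v w) := h2 _ (by omega)
        exact hjmem (e1.symm.trans e2)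
      rw [hset, measure_empty, if_neg (by omega)]

lemma meas_joint (hb : 2 ≤ b) (v w : ℕ → Fin b) (hvw : v ≠ w) (k l : ℕ) :
    μS {S | k + 1 ≤ cpl v S ∧ l + 1 ≤ cpl w S} =
      if min (k + 1) (l + 1) ≤ cpl v w then
        ENNReal.ofReal (((1 : ℝ) / b) ^ max (k + 1) (l + 1)) else 0 := by
  have hset : {S : ℕ → Fin b | k + 1 ≤ cpl v S ∧ l + 1 ≤ cpl w S} =
      (Acyl v (k + 1) ∩ Acyl w (l + 1)) \ (Ncyl v ∪ Ncyl w) := by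
    have h1 : {S : ℕ → Fin b | k + 1 ≤ cpl v S ∧ l + 1 ≤ cpl w S} =
        {S : ℕ → Fin b | k + 1 ≤ cpl v S} ∩ {S : ℕ → Fin b | l + 1 ≤ cpl w S} := rfl
    rw [h1, event_eq, event_eq]
    ext S
    simp only [mem_inter_iff, mem_diff, mem_union]
    tauto
  rw [hset, measure_diff_null
    (measure_union_null (ncyl_null μS hcyl hb v) (ncyl_null μS hcyl hb w)),
    meas_acyl_inter μS hcyl v w hvw]



lemma lintegral_single (hb : 2 ≤ b) (v : ℕ → Fin b) :
    ∫⁻ S, (cpl v S : ℝ≥0∞) ∂μS = ∑' k : ℕ, ENNReal.ofReal (((1 : ℝ) / b) ^ (k + 1)) := by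
  calc ∫⁻ S, (cpl v S : ℝ≥0∞) ∂μS
      = ∫⁻ S, ∑' k : ℕ,
          Set.indicator {S' : ℕ → Fin b | k + 1 ≤ cpl v S'} (fun _ => (1 : ℝ≥0∞)) S ∂μS := by
        refine lintegral_congr fun S => ?_
        rw [nat_cast_tsum]
        refine tsum_congr fun k => ?_
        rw [Set.indicator_apply]
        rfl
    _ = ∑' k : ℕ, ∫⁻ S,
          Set.indicator {S' : ℕ → Fin b | k + 1 ≤ cpl v S'} (fun _ => (1 : ℝ≥0∞)) S ∂μS :=
        lintegral_tsum fun k => (measurable_const.indicator (measurableSet_event v k)).aemeasurable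
    _ = ∑' k : ℕ, ENNReal.ofReal (((1 : ℝ) / b) ^ (k + 1)) := by
        refine tsum_congr fun k => ?_
        rw [lintegral_indicator_const (measurableSet_event v k), one_mul,
          meas_event μS hcyl hb v k]

lemma lintegral_prod_cpl (hb : 2 ≤ b) (v w : ℕ → Fin b) (hvw : v ≠ w) :
    ∫⁻ S, (cpl v S : ℝ≥0∞) * (cpl w S : ℝ≥0∞) ∂μS =
      ∑' k : ℕ, ∑' l : ℕ, (if min (k + 1) (l + 1) ≤ cpl v w then
        ENNReal.ofReal (((1 : ℝ) / b) ^ max (k + 1) (l + 1)) else 0) := by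
  have hevj : ∀ k l : ℕ, MeasurableSet {S : ℕ → Fin b | k + 1 ≤ cpl v S ∧ l + 1 ≤ cpl w S} :=
    fun k l => (measurableSet_event v k).inter (measurableSet_event w l)
  calc ∫⁻ S, (cpl v S : ℝ≥0∞) * (cpl w S : ℝ≥0∞) ∂μS
      = ∫⁻ S, ∑' k : ℕ, ∑' l : ℕ,
          Set.indicator {S' : ℕ → Fin b | k + 1 ≤ cpl v S' ∧ l + 1 ≤ cpl w S'}
            (fun _ => (1 : ℝ≥0∞)) S ∂μS := by
        refine lintegral_congr fun S => ?_
        rw [nat_cast_mul_tsum]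
        refine tsum_congr fun k => tsum_congr fun l => ?_
        rw [Set.indicator_apply]
        rfl
    _ = ∑' k : ℕ, ∫⁻ S, ∑' l : ℕ,
          Set.indicator {S' : ℕ → Fin b | k + 1 ≤ cpl v S' ∧ l + 1 ≤ cpl w S'}
            (fun _ => (1 : ℝ≥0∞)) S ∂μS :=
        lintegral_tsum fun k => (Measurable.ennreal_tsum fun l =>
          measurable_const.indicator (hevj k l)).aemeasurable
    _ = ∑' k : ℕ, ∑' l : ℕ, ∫⁻ S,
          Set.indicator {S' : ℕ → Fin b | k + 1 ≤ cpl v S' ∧ l + 1 ≤ cpl w S'}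
            (fun _ => (1 : ℝ≥0∞)) S ∂μS :=
        tsum_congr fun k => lintegral_tsum fun l =>
          (measurable_const.indicator (hevj k l)).aemeasurable
    _ = ∑' k : ℕ, ∑' l : ℕ, (if min (k + 1) (l + 1) ≤ cpl v w then
          ENNReal.ofReal (((1 : ℝ) / b) ^ max (k + 1) (l + 1)) else 0) := by
        refine tsum_congr fun k => tsum_congr fun l => ?_
        rw [lintegral_indicator_const (hevj k l), one_mul, meas_joint μS hcyl hb v w hvw k l]

lemma integral_single [IsProbabilityMeasure μS] (hb : 2 ≤ b) (v : ℕ → Fin b) :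
    ∫ S, ((cpl v S : ℕ) : ℝ) ∂μS = ((1:ℝ) / b) * (1 - 1 / (b : ℝ))⁻¹ := by
  have hb2 : (2 : ℝ) ≤ (b : ℝ) := by exact_mod_cast hb
  have hp0 : (0 : ℝ) ≤ 1 / b := by positivity
  have hp1 : (1 : ℝ) / b < 1 := by rw [div_lt_one (by linarith)]; linarith
  have hmeas : Measurable fun S : ℕ → Fin b => ((cpl v S : ℕ) : ℝ) :=
    measurable_from_top.comp (measurable_cpl v)
  rw [integral_eq_lintegral_of_nonneg_ae (Filter.Eventually.of_forall fun S => by positivity)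
    hmeas.aestronglyMeasurable]
  have h1 : ∀ S : ℕ → Fin b, ENNReal.ofReal ((cpl v S : ℕ) : ℝ) = ((cpl v S : ℕ) : ℝ≥0∞) :=
    fun S => ENNReal.ofReal_natCast _
  rw [lintegral_congr h1, lintegral_single μS hcyl hb v,
    ← ENNReal.ofReal_tsum_of_nonneg (fun k => by positivity) (summable_pow_succ hp0 hp1),
    ENNReal.toReal_ofReal (tsum_nonneg fun k => by positivity), tsum_pow_succ hp0 hp1]

lemma integral_prod [IsProbabilityMeasure μS] (hb : 2 ≤ b) (v w : ℕ → Fin b) (hvw : v ≠ w) :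
    ∫ S, ((cpl v S : ℕ) : ℝ) * ((cpl w S : ℕ) : ℝ) ∂μS =
      ∑' k : ℕ, (if k + 1 ≤ cpl v w
        then (1 / (b : ℝ)) * (1 - 1 / (b:ℝ))⁻¹ +
          ((k + 1) * (1 / (b : ℝ)) ^ (k + 1) -
            ∑ l ∈ Finset.range (k + 1), (1 / (b : ℝ)) ^ (l + 1))
        else (cpl v w : ℝ) * (1 / (b : ℝ)) ^ (k + 1)) := by
  have hb2 : (2 : ℝ) ≤ (b : ℝ) := by exact_mod_cast hb
  have hp0 : (0 : ℝ) ≤ 1 / b := by positivity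
  have hp1 : (1 : ℝ) / b < 1 := by rw [div_lt_one (by linarith)]; linarith
  have hmeas : Measurable fun S : ℕ → Fin b => ((cpl v S : ℕ) : ℝ) * ((cpl w S : ℕ) : ℝ) :=
    (measurable_from_top.comp (measurable_cpl v)).mul
      (measurable_from_top.comp (measurable_cpl w))
  rw [integral_eq_lintegral_of_nonneg_ae
    (Filter.Eventually.of_forall fun S => by positivity) hmeas.aestronglyMeasurable]
  have h1 : ∀ S : ℕ → Fin b,
      ENNReal.ofReal (((cpl v S : ℕ) : ℝ) * ((cpl w S : ℕ) : ℝ))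
        = ((cpl v S : ℕ) : ℝ≥0∞) * ((cpl w S : ℕ) : ℝ≥0∞) := fun S => by
    rw [ENNReal.ofReal_mul (by positivity), ENNReal.ofReal_natCast, ENNReal.ofReal_natCast]
  rw [lintegral_congr h1, lintegral_prod_cpl μS hcyl hb v w hvw]
  have hsumg : ∀ k : ℕ, Summable fun l : ℕ =>
      (if min (k + 1) (l + 1) ≤ cpl v w then ((1 : ℝ) / b) ^ max (k + 1) (l + 1) else 0) :=
    fun k => Summable.of_nonneg_of_le (fun l => by split <;> positivity)
      (fun l => by
        split
        · exact pow_le_pow_of_le_one hp0 hp1.le (le_max_right _ _)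
        · positivity)
      (summable_pow_succ hp0 hp1)
  have h3 : ∀ k : ℕ,
      (∑' l : ℕ, (if min (k + 1) (l + 1) ≤ cpl v w then
          ENNReal.ofReal (((1 : ℝ) / b) ^ max (k + 1) (l + 1)) else 0))
        = ENNReal.ofReal (∑' l : ℕ,
            (if min (k + 1) (l + 1) ≤ cpl v w then ((1 : ℝ) / b) ^ max (k + 1) (l + 1) else 0)) := by
    intro k
    calc (∑' l : ℕ, (if min (k + 1) (l + 1) ≤ cpl v w then
          ENNReal.ofReal (((1 : ℝ) / b) ^ max (k + 1) (l + 1)) else 0))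
        = ∑' l : ℕ, ENNReal.ofReal
            (if min (k + 1) (l + 1) ≤ cpl v w then ((1 : ℝ) / b) ^ max (k + 1) (l + 1) else 0) :=
          tsum_congr fun l => by split <;> simp
      _ = ENNReal.ofReal (∑' l : ℕ,
            (if min (k + 1) (l + 1) ≤ cpl v w then ((1 : ℝ) / b) ^ max (k + 1) (l + 1) else 0)) :=
          (ENNReal.ofReal_tsum_of_nonneg (fun l => by split <;> positivity) (hsumg k)).symm
  rw [tsum_congr h3]
  have h4 : ∀ k : ℕ,
      (∑' l : ℕ, (if min (k + 1) (l + 1) ≤ cpl v w then ((1 : ℝ) / b) ^ max (k + 1) (l + 1) else 0))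
        = (if k + 1 ≤ cpl v w
            then (1 / (b : ℝ)) * (1 - 1 / (b:ℝ))⁻¹ +
              ((k + 1) * (1 / (b : ℝ)) ^ (k + 1) -
                ∑ l ∈ Finset.range (k + 1), (1 / (b : ℝ)) ^ (l + 1))
            else (cpl v w : ℝ) * (1 / (b : ℝ)) ^ (k + 1)) := by
    intro k
    by_cases h : k + 1 ≤ cpl v w
    · rw [if_pos h, innerA hp0 hp1 k (cpl v w) h]
    · rw [if_neg h, innerB k (cpl v w) h]
  have hnonneg : ∀ k : ℕ, 0 ≤ (if k + 1 ≤ cpl v w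
      then (1 / (b : ℝ)) * (1 - 1 / (b:ℝ))⁻¹ +
        ((k + 1) * (1 / (b : ℝ)) ^ (k + 1) -
          ∑ l ∈ Finset.range (k + 1), (1 / (b : ℝ)) ^ (l + 1))
      else (cpl v w : ℝ) * (1 / (b : ℝ)) ^ (k + 1)) := fun k => by
    rw [← h4 k]
    exact tsum_nonneg fun l => by split <;> positivity
  rw [tsum_congr fun k => congrArg ENNReal.ofReal (h4 k),
    ← ENNReal.ofReal_tsum_of_nonneg hnonneg (summable_inner hp0 hp1 (cpl v w)),
    ENNReal.toReal_ofReal (tsum_nonneg hnonneg)]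

end Meas




end CovUnifAux

open CovUnifAux in
/-- In the uniform model, for `v ≠ w`:
`Cov(j(v,S), j(w,S)) = b/(b−1)² − (b+1)/(b−1)² · b^{−j(v,w)}`. -/
theorem covariance_coincidences_uniform (b : ℕ) (hb : 2 ≤ b)
    (μS : Measure (ℕ → Fin b)) [IsProbabilityMeasure μS]
    (hcyl : ∀ (u : ℕ → Fin b) (k : ℕ),
      μS {S | ∀ i < k, S i = u i} = ENNReal.ofReal (((1 : ℝ) / b) ^ k))
    (v w : ℕ → Fin b) (hvw : v ≠ w) :
    (∫ S, ((cpl v S : ℕ) : ℝ) * ((cpl w S : ℕ) : ℝ) ∂μS) -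
        (∫ S, ((cpl v S : ℕ) : ℝ) ∂μS) * (∫ S, ((cpl w S : ℕ) : ℝ) ∂μS) =
      (b : ℝ) / ((b : ℝ) - 1) ^ 2 -
        ((b : ℝ) + 1) / ((b : ℝ) - 1) ^ 2 * ((1 : ℝ) / b) ^ (cpl v w) := by
  have hb2 : (2 : ℝ) ≤ (b : ℝ) := by exact_mod_cast hb
  have hp0 : (0 : ℝ) ≤ 1 / b := by positivity
  have hp1 : (1 : ℝ) / b < 1 := by rw [div_lt_one (by linarith)]; linarith
  rw [integral_single μS hcyl hb v, integral_single μS hcyl hb w,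
    integral_prod μS hcyl hb v w hvw, outerSum hp0 hp1 (cpl v w)]
  have h := final_algebra (b : ℝ) hb2 (cpl v w)
  linarith [h]
end

section
/- In the anti-symmetric case b = 2, p := p_{00} = p_{11}, the unique solution Z_0 of Z_0 ≐ (B_p p + (1−B_p)(1−p)) Z_0 + 1 (B_p Bernoulli(p), independent of Z_0) is given explicitly by Z_0 = ((1−2p)/(p(1−p))) ξ + 1/(1−p), where ξ is uniform on [0,1]; that is, the law of ((1−2p)/(p(1−p))) ξ + 1/(1−p) satisfies the perpetuity equation. -/
/-!
Let `f x = (1 - 2p) / (p (1 - p)) x + 1 / (1 - p)`, so that `ν` is the law of `f ξ`. Splitting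
`ξ` according to whether `ξ ≤ p` writes it as `p ξ'` or `p + (1 - p) ξ'` with `ξ'` again
uniform, and `f (p x) = p f(x) + 1`, `f (p + (1 - p) x) = (1 - p) f(x) + 1`; hence `ν` solves
the perpetuity equation. For uniqueness, the characteristic functions of two solutions differ by
a continuous `d` with `d 0 = 0` and `|d t| ≤ p |d (p t)| + (1 - p) |d ((1 - p) t)|`; iterating
pushes the arguments into any neighbourhood of `0`, so `d = 0`.
-/

open MeasureTheory Set Filter Topology Complex

/-- The law of `(B p + (1 - B) (1 - p)) Z + 1` for `Z ∼ μ` and independent `B ∼ Bernoulli p`.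
-/
noncomputable def perpetuityOperator (p : ℝ) (μ : Measure ℝ) : Measure ℝ :=
  ENNReal.ofReal p • μ.map (fun z => p * z + 1) +
    ENNReal.ofReal (1 - p) • μ.map (fun z => (1 - p) * z + 1)

lemma map_affine_volume_restrict {a : ℝ} (ha : a ≠ 0) (b : ℝ) (s : Set ℝ) :
    (volume.restrict s).map (fun x => a * x + b) =
      ENNReal.ofReal |a|⁻¹ • volume.restrict ((fun x => a * x + b) '' s) := by
  have he : MeasurableEmbedding (fun x : ℝ => a * x + b) :=
    (affineHomeomorph a b ha).toMeasurableEquiv.measurableEmbedding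
  have hvol : volume.map (fun x : ℝ => a * x + b) = ENNReal.ofReal |a|⁻¹ • volume := by
    rw [show (fun x : ℝ => a * x + b) = (· + b) ∘ (a * ·) from rfl,
      ← Measure.map_map (measurable_add_const b) (measurable_const_mul a),
      Real.map_volume_mul_left ha, Measure.map_smul, map_add_right_eq_self, abs_inv]
  rw [← he.injective.preimage_image s, ← he.restrict_map, hvol, Measure.restrict_smul,
    he.injective.preimage_image]

lemma volume_restrict_Icc_add_Icc {a b c : ℝ} (hab : a ≤ b) (hbc : b ≤ c) :
    volume.restrict (Icc a b) + volume.restrict (Icc b c) = volume.restrict (Icc a c) := by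
  rw [← Icc_union_Icc_eq_Icc hab hbc, ← Measure.restrict_union_add_inter _ measurableSet_Icc,
    Icc_inter_Icc_eq_singleton hab hbc, Measure.restrict_eq_zero.mpr Real.volume_singleton,
    add_zero]

lemma volume_restrict_Icc_zero_one_eq_mixture {p : ℝ} (hp0 : 0 < p) (hp1 : p < 1) :
    volume.restrict (Icc (0 : ℝ) 1) =
      ENNReal.ofReal p • (volume.restrict (Icc (0 : ℝ) 1)).map (fun x => p * x) +
        ENNReal.ofReal (1 - p) •
          (volume.restrict (Icc (0 : ℝ) 1)).map (fun x => (1 - p) * x + p) := by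
  have hq0 : 0 < 1 - p := by linarith
  have hleft := map_affine_volume_restrict hp0.ne' 0 (Icc 0 1)
  simp only [add_zero] at hleft
  rw [hleft, map_affine_volume_restrict hq0.ne', image_mul_left_Icc' hp0, image_affine_Icc' hq0,
    smul_smul, smul_smul, abs_of_pos hp0, abs_of_pos hq0, ← ENNReal.ofReal_mul hp0.le,
    ← ENNReal.ofReal_mul hq0.le, mul_inv_cancel₀ hp0.ne', mul_inv_cancel₀ hq0.ne',
    ENNReal.ofReal_one, one_smul, one_smul]
  norm_num
  exact (volume_restrict_Icc_add_Icc hp0.le hp1.le).symm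

theorem perpetuityOperator_map_uniform {p : ℝ} (hp0 : 0 < p) (hp1 : p < 1) :
    perpetuityOperator p ((volume.restrict (Icc (0 : ℝ) 1)).map
        (fun x => (1 - 2 * p) / (p * (1 - p)) * x + 1 / (1 - p))) =
      (volume.restrict (Icc (0 : ℝ) 1)).map
        (fun x => (1 - 2 * p) / (p * (1 - p)) * x + 1 / (1 - p)) := by
  have hq0 : 1 - p ≠ 0 := by linarith
  set f := fun x : ℝ => (1 - 2 * p) / (p * (1 - p)) * x + 1 / (1 - p)
  conv_rhs => rw [volume_restrict_Icc_zero_one_eq_mixture hp0 hp1]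
  rw [perpetuityOperator, Measure.map_add _ _ (by fun_prop), Measure.map_smul, Measure.map_smul,
    Measure.map_map (by fun_prop) (by fun_prop), Measure.map_map (by fun_prop) (by fun_prop),
    Measure.map_map (by fun_prop) (by fun_prop), Measure.map_map (by fun_prop) (by fun_prop)]
  congr 3 <;> ext x <;> simp only [f, Function.comp_apply] <;> field_simp <;> ring

lemma charFun_add_measure {E : Type*} [NormedAddCommGroup E] [InnerProductSpace ℝ E]
    [MeasurableSpace E] [OpensMeasurableSpace E] {μ ν : Measure E} [IsFiniteMeasure μ]
    [IsFiniteMeasure ν] (t : E) :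
    charFun (μ + ν) t = charFun μ t + charFun ν t := by
  simp only [charFun_eq_integral_innerProbChar]
  exact integral_add_measure (BoundedContinuousFunction.integrable _ _)
    (BoundedContinuousFunction.integrable _ _)

lemma charFun_smul_measure {E : Type*} [NormedAddCommGroup E] [InnerProductSpace ℝ E]
    [MeasurableSpace E] {μ : Measure E} (c : ENNReal) (t : E) :
    charFun (c • μ) t = c.toReal * charFun μ t := by
  simp only [charFun_apply, integral_smul_measure, Complex.real_smul]

lemma charFun_map_mul_add {μ : Measure ℝ} (a b t : ℝ) :
    charFun (μ.map (fun z => a * z + b)) t = charFun μ (a * t) * cexp (b * t * I) := by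
  rw [show (fun z : ℝ => a * z + b) = (· + b) ∘ (a * ·) from rfl,
    ← Measure.map_map (measurable_add_const b) (measurable_const_mul a),
    charFun_map_add_const, charFun_map_mul]
  simp [mul_comm]

lemma charFun_perpetuityOperator {p : ℝ} (hp0 : 0 ≤ p) (hp1 : p ≤ 1) {μ : Measure ℝ}
    [IsFiniteMeasure μ] (t : ℝ) :
    charFun (perpetuityOperator p μ) t =
      (p * charFun μ (p * t) + (1 - p) * charFun μ ((1 - p) * t)) * cexp (t * I) := by
  have := (μ.map (fun z => p * z + 1)).smul_finite (ENNReal.ofReal_ne_top (r := p))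
  have := (μ.map (fun z => (1 - p) * z + 1)).smul_finite (ENNReal.ofReal_ne_top (r := 1 - p))
  rw [perpetuityOperator, charFun_add_measure, charFun_smul_measure, charFun_smul_measure,
    charFun_map_mul_add, charFun_map_mul_add, ENNReal.toReal_ofReal hp0,
    ENNReal.toReal_ofReal (by linarith)]
  push_cast
  rw [one_mul]
  ring

theorem eq_zero_of_norm_le_average_rescaled {E : Type*} [NormedAddCommGroup E] {d : ℝ → E}
    {p : ℝ} (hp0 : 0 < p) (hp1 : p < 1) (hd : ContinuousAt d 0) (hd0 : d 0 = 0)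
    (h : ∀ t, ‖d t‖ ≤ p * ‖d (p * t)‖ + (1 - p) * ‖d ((1 - p) * t)‖) : d = 0 := by
  set m := max p (1 - p)
  have hm0 : 0 ≤ m := le_max_of_le_left hp0.le
  have hm1 : m < 1 := max_lt hp1 (by linarith)
  suffices ∀ ε > 0, ∀ t, ‖d t‖ ≤ ε from funext fun t =>
    norm_le_zero_iff.mp (le_of_forall_pos_le_add fun ε hε => by simpa using this ε hε t)
  intro ε hε
  obtain ⟨δ, hδ, hball⟩ := Metric.continuousAt_iff.mp hd ε hε
  have hscale : ∀ c, 0 ≤ c → c ≤ m → ∀ (n : ℕ) t, |c * t| * m ^ n ≤ |t| * m ^ (n + 1) := by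
    intro c hc hcm n t
    rw [abs_mul, abs_of_nonneg hc, pow_succ]
    nlinarith [mul_nonneg (abs_nonneg t) (pow_nonneg hm0 n)]
  have hsmall : ∀ n : ℕ, ∀ t, |t| * m ^ n < δ → ‖d t‖ ≤ ε := by
    intro n
    induction n with
    | zero =>
      intro t ht
      simpa [hd0] using (hball (x := t) (by simpa using ht)).le
    | succ n ih =>
      intro t ht
      calc ‖d t‖ ≤ p * ‖d (p * t)‖ + (1 - p) * ‖d ((1 - p) * t)‖ := h t
        _ ≤ p * ε + (1 - p) * ε := by
          have h₁ := ih _ ((hscale p hp0.le (le_max_left _ _) n t).trans_lt ht)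
          have h₂ := ih _ ((hscale (1 - p) (by linarith) (le_max_right _ _) n t).trans_lt ht)
          exact add_le_add (mul_le_mul_of_nonneg_left h₁ hp0.le)
            (mul_le_mul_of_nonneg_left h₂ (by linarith))
        _ = ε := by ring
  intro t
  have hlim : Tendsto (fun n : ℕ => |t| * m ^ n) atTop (𝓝 0) := by
    simpa using (tendsto_pow_atTop_nhds_zero_of_lt_one hm0 hm1).const_mul |t|
  obtain ⟨n, hn⟩ := (hlim.eventually (gt_mem_nhds hδ)).exists
  exact hsmall n t hn

theorem perpetuityOperator_fixedPoint_unique {p : ℝ} (hp0 : 0 < p) (hp1 : p < 1)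
    {μ ν : Measure ℝ} [IsProbabilityMeasure μ] [IsProbabilityMeasure ν]
    (hμ : perpetuityOperator p μ = μ) (hν : perpetuityOperator p ν = ν) : μ = ν := by
  refine Measure.ext_of_charFun (sub_eq_zero.mp ?_)
  refine eq_zero_of_norm_le_average_rescaled hp0 hp1 (by fun_prop) (by simp) fun t => ?_
  set d := charFun μ - charFun ν
  have hdiff : d t =
      ((p : ℂ) * d (p * t) + ((1 - p : ℝ) : ℂ) * d ((1 - p) * t)) * cexp (t * I) := by
    simp only [d, Pi.sub_apply]
    conv_lhs => rw [← hμ, ← hν]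
    rw [charFun_perpetuityOperator hp0.le hp1.le, charFun_perpetuityOperator hp0.le hp1.le]
    push_cast
    ring
  rw [hdiff, norm_mul, Complex.norm_exp_ofReal_mul_I, mul_one]
  refine (norm_add_le _ _).trans_eq ?_
  rw [norm_mul, norm_mul, Complex.norm_real, Complex.norm_real, Real.norm_of_nonneg hp0.le,
    Real.norm_of_nonneg (by linarith)]

/-- In the anti-symmetric case `b = 2`, `p = p₀₀ = p₁₁`, the unique solution of the
perpetuity `Z₀ ≐ (B_p p + (1−B_p)(1−p)) Z₀ + 1` is
`Z₀ = ((1−2p)/(p(1−p))) ξ + 1/(1−p)` with `ξ` uniform on `[0,1]`: the law of this random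
variable satisfies the perpetuity equation, and it is the unique probability law doing
so. -/
theorem perpetuity_explicit_solution (p : ℝ) (hp0 : 0 < p) (hp1 : p < 1)
    (ν : Measure ℝ)
    (hν : ν = Measure.map
      (fun x : ℝ => (1 - 2 * p) / (p * (1 - p)) * x + 1 / (1 - p))
      (volume.restrict (Set.Icc (0 : ℝ) 1))) :
    (ENNReal.ofReal p • Measure.map (fun z : ℝ => p * z + 1) ν +
        ENNReal.ofReal (1 - p) • Measure.map (fun z : ℝ => (1 - p) * z + 1) ν = ν) ∧
    (∀ ν' : Measure ℝ, IsProbabilityMeasure ν' →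
      (ENNReal.ofReal p • Measure.map (fun z : ℝ => p * z + 1) ν' +
        ENNReal.ofReal (1 - p) • Measure.map (fun z : ℝ => (1 - p) * z + 1) ν' = ν') →
      ν' = ν) := by
  have hfix : perpetuityOperator p ν = ν := hν ▸ perpetuityOperator_map_uniform hp0 hp1
  have : IsProbabilityMeasure (volume.restrict (Icc (0 : ℝ) 1)) := ⟨by simp⟩
  have : IsProbabilityMeasure ν := hν ▸ Measure.isProbabilityMeasure_map (by fun_prop)
  exact ⟨hfix, fun ν' _ hν' => perpetuityOperator_fixedPoint_unique hp0 hp1 hν' hfix⟩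
end
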